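/- arXiv:1805.02366 — 2 statements merged into one kernel-verified Lean document; each statement's English description precedes it below -/
import Mathlib

section
/- For any finite affine hyperplane arrangement A in a real vector space and any hyperplane H ∈ A, the characteristic polynomial satisfies the deletion-restriction recursion χ(A, t) = χ(A \ {H}, t) − χ(A^H, t), where A^H is the restriction of A to H. -/
/-!
If A is a finite hyperplane arrangement in F_q^l, then the number of points of
F_q^l lying on no hyperplane of A equals χ(A, q).
-/

open scoped Classical

noncomputable section

variable {K : Type*} [Field K] {l : ℕ}

/-- `H` is an affine hyperplane: the zero locus of an affine map with nonzero linear part. -/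
def IsHyperplane (H : AffineSubspace K (Fin l → K)) : Prop :=
  ∃ f : (Fin l → K) →ᵃ[K] K, f.linear ≠ 0 ∧ (H : Set (Fin l → K)) = f ⁻¹' {0}

/-- The flats (nonempty intersections of subarrangements, intersected with the ambient flat
`V₀`) of the arrangement `A`. Taking `V₀ = ⊤` gives the usual intersection lattice. -/
def flats (V₀ : AffineSubspace K (Fin l → K)) (A : Finset (AffineSubspace K (Fin l → K))) :
    Finset (AffineSubspace K (Fin l → K)) :=
  (A.powerset.image fun B => V₀ ⊓ sInf (B : Set (AffineSubspace K (Fin l → K)))).filter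
    fun X => (X : Set (Fin l → K)).Nonempty

/-- `μ` is the Möbius function of the intersection poset of `A` (ordered by reverse
inclusion, with minimal element the ambient flat `V₀`): `μ V₀ = 1` and
`μ X = -∑_{Y <_L X} μ Y`, where `Y <_L X` means `X ⊊ Y` as subspaces. -/
def IsMobius (V₀ : AffineSubspace K (Fin l → K)) (A : Finset (AffineSubspace K (Fin l → K)))
    (μ : AffineSubspace K (Fin l → K) → ℤ) : Prop :=
  μ V₀ = 1 ∧ ∀ X ∈ flats V₀ A, X ≠ V₀ →
    μ X = -∑ Y ∈ (flats V₀ A).filter (fun Y => X < Y), μ Y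

/-- The characteristic polynomial `χ(A,t) = ∑_{X ∈ L(A)} μ(X) t^{dim X}` evaluated at `t`. -/
def charEval (V₀ : AffineSubspace K (Fin l → K)) (A : Finset (AffineSubspace K (Fin l → K)))
    (μ : AffineSubspace K (Fin l → K) → ℤ) (t : ℤ) : ℤ :=
  ∑ X ∈ flats V₀ A, μ X * t ^ (Module.finrank K X.direction)
/-- The restriction `A^H` of `A` to `H ∈ A`: the nonempty intersections `H ⊓ H'`
for `H' ∈ A`, `H' ≠ H`, viewed as an arrangement in the affine space `H`. -/
def restriction {K : Type*} [Field K] {l : ℕ} (A : Finset (AffineSubspace K (Fin l → K)))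
    (H : AffineSubspace K (Fin l → K)) : Finset (AffineSubspace K (Fin l → K)) :=
  ((A.erase H).image fun H' => H ⊓ H').filter fun X => (X : Set (Fin l → K)).Nonempty

/-!
Both sides are evaluated by Whitney's formula
`χ(A, t) = ∑_{B ⊆ A, ⋂B ≠ ∅} (-1)^|B| t^(dim ⋂B)`. It holds because the signed count
`∑_{B ⊆ A, ⋂B = X} (-1)^|B|` satisfies the recursion defining `μ X`: summed over all flats
`Y ⊇ X`, it becomes the alternating sum over the subsets of `{a ∈ A | X ⊆ a}`, which is `1` if
that set is empty (i.e. `X` is the ambient flat) and `0` otherwise. For this last equivalence no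
member of the arrangement may contain the ambient flat; for the restriction to `H` that is the
fact that distinct hyperplanes are incomparable.

Splitting Whitney's sum for `A` according to whether `H ∈ B`, the subsets avoiding `H` give
`χ(A \ {H}, t)`, and `B ↦ B \ {H}` turns the subsets containing `H` into the terms of
Whitney's sum for `A \ {H}` inside `H`, with the opposite sign. That arrangement has the same
flats as `A^H`, so its sum is `χ(A^H, t)`.
-/

open Finset

namespace IsHyperplane

variable {H H' : AffineSubspace K (Fin l → K)}

lemma nonempty (h : IsHyperplane H) : (H : Set (Fin l → K)).Nonempty := by
  obtain ⟨f, hf, hH⟩ := h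
  obtain ⟨p, hp⟩ := f.linear_surjective_iff.1 (LinearMap.surjective hf) 0
  exact ⟨p, by rw [hH]; exact hp⟩

lemma isCoatom_direction (h : IsHyperplane H) : IsCoatom H.direction := by
  obtain ⟨p, hp⟩ := h.nonempty
  obtain ⟨f, hf, hH⟩ := h
  have hfp : f p = 0 := by rw [hH] at hp; exact hp
  have hdir : H.direction = LinearMap.ker f.linear := by
    ext v
    rw [← AffineSubspace.vadd_mem_iff_mem_direction v hp, ← SetLike.mem_coe, hH,
      LinearMap.mem_ker, Set.mem_preimage, Set.mem_singleton_iff, f.map_vadd, hfp, vadd_eq_add,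
      add_zero]
  rw [hdir]
  exact LinearMap.isCoatom_ker_of_surjective (LinearMap.surjective hf)

lemma ne_top (h : IsHyperplane H) : H ≠ ⊤ := fun hH =>
  h.isCoatom_direction.1 (by rw [hH, AffineSubspace.direction_top])

lemma eq_of_le (h : IsHyperplane H) (h' : IsHyperplane H') (hle : H ≤ H') : H = H' := by
  have hdir : H.direction = H'.direction :=
    ((h.isCoatom_direction.le_iff.1 (AffineSubspace.direction_le hle)).resolve_left
      h'.isCoatom_direction.1).symm
  obtain ⟨p, hp⟩ := h.nonempty
  exact AffineSubspace.ext_of_direction_eq hdir ⟨p, hp, hle hp⟩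

end IsHyperplane

section UpperTriangular

variable {α M : Type*} [PartialOrder α] [AddCommGroup M] {s : Finset α}

lemma Finset.sum_filter_le_eq_add_sum_filter_lt {x : α} (hx : x ∈ s) (f : α → M) :
    ∑ y ∈ s with x ≤ y, f y = f x + ∑ y ∈ s with x < y, f y := by
  have hsplit : s.filter (x ≤ ·) = insert x (s.filter (x < ·)) := by
    ext y
    grind [le_iff_eq_or_lt]
  rw [hsplit, sum_insert (by simp)]

lemma Finset.eqOn_of_sum_filter_le_eq {f g : α → M}
    (h : ∀ x ∈ s, ∑ y ∈ s with x ≤ y, f y = ∑ y ∈ s with x ≤ y, g y) : Set.EqOn f g s := by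
  suffices ∀ x : s, f x = g x from fun x hx => this ⟨x, hx⟩
  intro x
  induction x using WellFoundedGT.induction with
  | _ x ih =>
    have hgt : ∑ y ∈ s with ↑x < y, f y = ∑ y ∈ s with ↑x < y, g y :=
      sum_congr rfl fun y hy => ih ⟨y, (mem_filter.1 hy).1⟩ (mem_filter.1 hy).2
    have hx := h x x.2
    rw [sum_filter_le_eq_add_sum_filter_lt x.2, sum_filter_le_eq_add_sum_filter_lt x.2,
      hgt] at hx
    exact add_right_cancel hx

end UpperTriangular

def flatOf (V₀ : AffineSubspace K (Fin l → K)) (B : Finset (AffineSubspace K (Fin l → K))) :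
    AffineSubspace K (Fin l → K) :=
  V₀ ⊓ sInf (B : Set (AffineSubspace K (Fin l → K)))

section Flats

variable {V₀ H X : AffineSubspace K (Fin l → K)}
  {A B C : Finset (AffineSubspace K (Fin l → K))}

lemma mem_flats :
    X ∈ flats V₀ A ↔ (∃ B ⊆ A, flatOf V₀ B = X) ∧ (X : Set (Fin l → K)).Nonempty := by
  simp [flats, flatOf]

lemma le_of_mem_flats (hX : X ∈ flats V₀ A) : X ≤ V₀ := by
  obtain ⟨⟨B, -, rfl⟩, -⟩ := mem_flats.1 hX
  exact inf_le_left

lemma flatOf_empty : flatOf V₀ ∅ = V₀ := by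
  simp [flatOf]

lemma flatOf_insert : flatOf V₀ (insert H B) = flatOf (V₀ ⊓ H) B := by
  simp [flatOf, sInf_insert, inf_assoc]

lemma le_flatOf_iff (hX : X ≤ V₀) : X ≤ flatOf V₀ B ↔ ∀ b ∈ B, X ≤ b := by
  simp [flatOf, hX, le_sInf_iff]

lemma flatOf_le_inf {b : AffineSubspace K (Fin l → K)} (hb : b ∈ B) :
    flatOf V₀ B ≤ V₀ ⊓ b :=
  inf_le_inf_left V₀ (sInf_le (mem_coe.2 hb))

lemma flatOf_le_flatOf (h : ∀ c ∈ C, ∃ b ∈ B, V₀ ⊓ b ≤ c) : flatOf V₀ B ≤ flatOf V₀ C :=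
  (le_flatOf_iff inf_le_left).2 fun c hc =>
    let ⟨_, hb, hbc⟩ := h c hc
    (flatOf_le_inf hb).trans hbc

lemma flats_restriction : flats H (restriction A H) = flats H (A.erase H) := by
  ext X
  simp only [mem_flats]
  refine and_congr_left fun hX => ⟨?_, ?_⟩
  · rintro ⟨C, hC, rfl⟩
    refine ⟨(A.erase H).filter (H ⊓ · ∈ C), filter_subset _ _,
      le_antisymm (flatOf_le_flatOf fun c hc => ?_) (flatOf_le_flatOf fun b hb => ?_)⟩
    · obtain ⟨⟨b, hb, rfl⟩, -⟩ := by simpa [restriction] using hC hc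
      exact ⟨b, mem_filter.2 ⟨mem_erase.2 hb, hc⟩, le_rfl⟩
    · exact ⟨H ⊓ b, (mem_filter.1 hb).2, inf_le_right.trans inf_le_right⟩
  · rintro ⟨B, hB, rfl⟩
    refine ⟨B.image (H ⊓ ·), fun c hc => ?_,
      le_antisymm (flatOf_le_flatOf fun b hb => ?_) (flatOf_le_flatOf fun c hc => ?_)⟩
    · obtain ⟨b, hb, rfl⟩ := mem_image.1 hc
      exact mem_filter.2 ⟨mem_image_of_mem _ (hB hb), hX.mono (flatOf_le_inf hb)⟩
    · exact ⟨H ⊓ b, mem_image_of_mem _ hb, inf_le_right.trans inf_le_right⟩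
    · obtain ⟨b, hb, rfl⟩ := mem_image.1 hc
      exact ⟨b, hb, le_rfl⟩

lemma isMobius_restriction_iff {μ : AffineSubspace K (Fin l → K) → ℤ} :
    IsMobius H (restriction A H) μ ↔ IsMobius H (A.erase H) μ := by
  rw [IsMobius, IsMobius, flats_restriction]

lemma charEval_restriction (μ : AffineSubspace K (Fin l → K) → ℤ) (t : ℤ) :
    charEval H (restriction A H) μ t = charEval H (A.erase H) μ t := by
  rw [charEval, charEval, flats_restriction]

end Flats

section Whitney

variable (V₀ : AffineSubspace K (Fin l → K)) (A : Finset (AffineSubspace K (Fin l → K)))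

def whitneyMobius (X : AffineSubspace K (Fin l → K)) : ℤ :=
  ∑ B ∈ A.powerset with flatOf V₀ B = X, (-1) ^ #B

def whitneySum (t : ℤ) : ℤ :=
  ∑ B ∈ A.powerset with (flatOf V₀ B : Set (Fin l → K)).Nonempty,
    (-1) ^ #B * t ^ Module.finrank K (flatOf V₀ B).direction

variable {V₀ A} {X : AffineSubspace K (Fin l → K)}

lemma sum_whitneyMobius_filter_le (hA : ∀ a ∈ A, ¬ V₀ ≤ a) (hX : X ∈ flats V₀ A) :
    ∑ Y ∈ flats V₀ A with X ≤ Y, whitneyMobius V₀ A Y = if X = V₀ then 1 else 0 := by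
  have hXV := le_of_mem_flats hX
  obtain ⟨⟨B₀, hB₀, hB₀X⟩, hXne⟩ := mem_flats.1 hX
  calc ∑ Y ∈ flats V₀ A with X ≤ Y, whitneyMobius V₀ A Y
      = ∑ B ∈ A.powerset with X ≤ flatOf V₀ B, (-1 : ℤ) ^ #B := by
        rw [← sum_fiberwise_of_maps_to (g := flatOf V₀) (t := (flats V₀ A).filter (X ≤ ·))]
        · refine sum_congr rfl fun Y hY => sum_congr ?_ fun _ _ => rfl
          rw [filter_filter]
          exact filter_congr fun B _ =>
            ⟨fun h => ⟨h ▸ (mem_filter.1 hY).2, h⟩, And.right⟩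
        · intro B hB
          obtain ⟨hBA, hXB⟩ := mem_filter.1 hB
          exact mem_filter.2 ⟨mem_flats.2 ⟨⟨B, mem_powerset.1 hBA, rfl⟩, hXne.mono hXB⟩, hXB⟩
    _ = ∑ B ∈ (A.filter (X ≤ ·)).powerset, (-1 : ℤ) ^ #B := by
        congr 1
        ext B
        simp [le_flatOf_iff hXV, subset_iff, imp_and, forall_and]
    _ = if X = V₀ then 1 else 0 := by
        rw [sum_powerset_neg_one_pow_card]
        refine if_congr ?_ rfl rfl
        rw [filter_eq_empty_iff]
        refine ⟨fun hA' => ?_, ?_⟩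
        · have hB₀e : B₀ = ∅ := eq_empty_of_forall_notMem fun b hb =>
            hA' (hB₀ hb) ((le_flatOf_iff hXV).1 hB₀X.ge b hb)
          rw [← hB₀X, hB₀e, flatOf_empty]
        · rintro rfl
          exact hA

variable {μ : AffineSubspace K (Fin l → K) → ℤ}

lemma IsMobius.sum_filter_le (hμ : IsMobius V₀ A μ) (hX : X ∈ flats V₀ A) :
    ∑ Y ∈ flats V₀ A with X ≤ Y, μ Y = if X = V₀ then 1 else 0 := by
  rw [sum_filter_le_eq_add_sum_filter_lt hX]
  split_ifs with hXV
  · subst hXV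
    have hnone : (flats X A).filter (X < ·) = ∅ :=
      filter_eq_empty_iff.2 fun Y hY hlt => (hlt.trans_le (le_of_mem_flats hY)).false
    rw [hμ.1, hnone, sum_empty, add_zero]
  · rw [hμ.2 X hX hXV, neg_add_cancel]

lemma IsMobius.eqOn_whitneyMobius (hA : ∀ a ∈ A, ¬ V₀ ≤ a) (hμ : IsMobius V₀ A μ) :
    Set.EqOn μ (whitneyMobius V₀ A) (flats V₀ A) :=
  eqOn_of_sum_filter_le_eq fun _ hX =>
    (hμ.sum_filter_le hX).trans (sum_whitneyMobius_filter_le hA hX).symm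

lemma charEval_eq_whitneySum (hA : ∀ a ∈ A, ¬ V₀ ≤ a) (hμ : IsMobius V₀ A μ) (t : ℤ) :
    charEval V₀ A μ t = whitneySum V₀ A t := by
  rw [charEval, whitneySum, ← sum_fiberwise_of_maps_to (g := flatOf V₀) (t := flats V₀ A)]
  · refine sum_congr rfl fun X hX => ?_
    rw [hμ.eqOn_whitneyMobius hA hX, whitneyMobius, sum_mul, filter_filter]
    refine sum_congr (filter_congr fun B _ => ?_) fun B hB => by rw [(mem_filter.1 hB).2.2]
    exact ⟨fun h => ⟨h ▸ (mem_flats.1 hX).2, h⟩, And.right⟩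
  · intro B hB
    obtain ⟨hBA, hne⟩ := mem_filter.1 hB
    exact mem_flats.2 ⟨⟨B, mem_powerset.1 hBA, rfl⟩, hne⟩

lemma whitneySum_eq_sub {H : AffineSubspace K (Fin l → K)} (hH : H ∈ A) (t : ℤ) :
    whitneySum V₀ A t = whitneySum V₀ (A.erase H) t - whitneySum (V₀ ⊓ H) (A.erase H) t := by
  unfold whitneySum
  conv_lhs => rw [← insert_erase hH]
  rw [sum_filter, sum_filter, sum_filter, sum_powerset_insert (notMem_erase H A),
    sub_eq_add_neg, ← sum_neg_distrib]
  refine congrArg _ (sum_congr rfl fun B hB => ?_)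
  have hHB : H ∉ B := fun h => notMem_erase H A (mem_powerset.1 hB h)
  rw [flatOf_insert, card_insert_of_notMem hHB, pow_succ]
  split_ifs <;> ring

end Whitney

/-- Deletion-restriction recursion for the characteristic polynomial:
`χ(A,t) = χ(A \ {H}, t) - χ(A^H, t)`. -/
theorem deletion_restriction {l : ℕ}
    (A : Finset (AffineSubspace ℝ (Fin l → ℝ))) (hA : ∀ H ∈ A, IsHyperplane H)
    (H : AffineSubspace ℝ (Fin l → ℝ)) (hH : H ∈ A)
    (μ μ' μ'' : AffineSubspace ℝ (Fin l → ℝ) → ℤ)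
    (hμ : IsMobius ⊤ A μ) (hμ' : IsMobius ⊤ (A.erase H) μ')
    (hμ'' : IsMobius H (restriction A H) μ'') :
    ∀ t : ℤ, charEval ⊤ A μ t =
      charEval ⊤ (A.erase H) μ' t - charEval H (restriction A H) μ'' t := by
  intro t
  have hA_top : ∀ a ∈ A, ¬ ⊤ ≤ a := fun a ha hle => (hA a ha).ne_top (top_le_iff.1 hle)
  have hA_H : ∀ a ∈ A.erase H, ¬ H ≤ a := fun a ha hle =>
    (mem_erase.1 ha).1 ((hA H hH).eq_of_le (hA a (mem_of_mem_erase ha)) hle).symm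
  rw [isMobius_restriction_iff] at hμ''
  rw [charEval_restriction, charEval_eq_whitneySum hA_top hμ,
    charEval_eq_whitneySum (fun a ha => hA_top a (mem_of_mem_erase ha)) hμ',
    charEval_eq_whitneySum hA_H hμ'', whitneySum_eq_sub hH, top_inf_eq]

end
end

section
/- (Saito's criterion, degree form) Let A be a central arrangement of n hyperplanes in K^l. If δ_1, ..., δ_l ∈ D(A) are homogeneous derivations that are linearly independent over S and ∑_{i=1}^l pdeg(δ_i) = n, then δ_1, ..., δ_l form a free basis of D(A). -/
noncomputable section

variable {K : Type*} [Field K] {l n : ℕ}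

/-- The linear form with coefficient vector `a`. -/
def lin (a : Fin l → K) : MvPolynomial (Fin l) K :=
  ∑ j, MvPolynomial.C (a j) * MvPolynomial.X j

/-- The polynomial vector field `δ = ∑_j f_j ∂_{x_j}` (given by its coefficient vector
`f`) applied to a polynomial `g`. -/
def derApp (f : Fin l → MvPolynomial (Fin l) K) (g : MvPolynomial (Fin l) K) :
    MvPolynomial (Fin l) K :=
  ∑ j, f j * MvPolynomial.pderiv j g

/-- The vector field with coefficient vector `f` is logarithmic for the central
arrangement with defining linear forms `α_k`: `δ(α_k) ∈ (α_k) S` for all `k`. -/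
def IsLogDer (α : Fin n → Fin l → K) (f : Fin l → MvPolynomial (Fin l) K) : Prop :=
  ∀ k, lin (α k) ∣ derApp f (lin (α k))

/-- The `α_k` are the defining forms of a central arrangement of `n` distinct
hyperplanes in `K^l`: they are nonzero and pairwise non-proportional. -/
def IsArrangement (α : Fin n → Fin l → K) : Prop :=
  (∀ k, α k ≠ 0) ∧ ∀ k k', k ≠ k' → ∀ c : K, α k' ≠ c • α k

/-! The determinant of a matrix whose rows are logarithmic vanishes modulo each `α_k`, since
the coefficient vector of `α_k` is then in its kernel; the `α_k` being pairwise non-associated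
primes, it is divisible by `Q = ∏ α_k`. For the matrix of the `δ_i` the determinant is nonzero
by independence and homogeneous of degree `∑ e_i = n = deg Q`, so it is a unit multiple of `Q`.
Cramer's rule then expresses the coefficients of a logarithmic `f` in the `δ_i` as quotients by
this determinant of determinants of logarithmic matrices, which are therefore polynomials. -/

open Function MvPolynomial Matrix

theorem Matrix.det_isHomogeneous_of_rows {σ ι R : Type*} [CommRing R] [Fintype ι]
    [DecidableEq ι] (M : Matrix ι ι (MvPolynomial σ R)) (e : ι → ℕ)
    (h : ∀ i j, (M i j).IsHomogeneous (e i)) :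
    M.det.IsHomogeneous (∑ i, e i) := by
  rw [Matrix.det_apply']
  refine IsHomogeneous.sum _ _ _ fun τ _ => ?_
  have hprod := IsHomogeneous.prod Finset.univ (fun i => M (τ i) i) (fun i => e (τ i))
    fun i _ => h (τ i) i
  rw [Equiv.sum_comp τ e] at hprod
  simpa using (isHomogeneous_C σ ((Equiv.Perm.sign τ : ℤ) : R)).mul hprod

theorem Prime.dvd_det_of_dvd_mulVec {ι R : Type*} [CommRing R] [Fintype ι] [DecidableEq ι]
    {p : R} (hp : Prime p) (M : Matrix ι ι R) {v : ι → R} (hv : ¬ ∀ j, p ∣ v j)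
    (h : ∀ i, p ∣ (M *ᵥ v) i) : p ∣ M.det := by
  have : (Ideal.span {p}).IsPrime := (Ideal.span_singleton_prime hp.ne_zero).mpr hp
  let π := Ideal.Quotient.mk (Ideal.span {p})
  have hπ : ∀ x, π x = 0 ↔ p ∣ x := fun x => by
    rw [Ideal.Quotient.eq_zero_iff_mem, Ideal.mem_span_singleton]
  have hkernel : (M.map π) *ᵥ (π ∘ v) = 0 := by
    funext i
    rw [← RingHom.map_mulVec, Pi.zero_apply, hπ]
    exact h i
  have hv' : π ∘ v ≠ 0 := fun h0 => hv fun j => (hπ _).mp (congrFun h0 j)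
  rw [← hπ, RingHom.map_det]
  exact Matrix.exists_mulVec_eq_zero_iff.mp ⟨_, hv', hkernel⟩

theorem MvPolynomial.associated_of_dvd_of_totalDegree_le {σ : Type*} {p q : MvPolynomial σ K}
    (h : p ∣ q) (hq : q ≠ 0) (hdeg : q.totalDegree ≤ p.totalDegree) : Associated p q := by
  obtain ⟨r, rfl⟩ := h
  have hr : r ≠ 0 := right_ne_zero_of_mul hq
  have hr0 : r.totalDegree = 0 := by
    rw [totalDegree_mul_of_isDomain (left_ne_zero_of_mul hq) hr] at hdeg
    omega
  have hcoeff : r.coeff 0 ≠ 0 := fun h0 =>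
    hr (by rw [totalDegree_eq_zero_iff_eq_C.mp hr0, h0, map_zero])
  exact associated_mul_unit_right p r
    (isUnit_iff_totalDegree_of_isReduced.mpr ⟨hcoeff.isUnit, hr0⟩)

theorem Matrix.exists_vecMul_eq_of_det_dvd {ι R : Type*} [CommRing R] [IsDomain R] [Fintype ι]
    [DecidableEq ι] {M : Matrix ι ι R} (hM : M.det ≠ 0) {f : ι → R}
    (h : ∀ i, M.det ∣ (M.updateRow i f).det) : ∃ g, g ᵥ* M = f := by
  choose g hg using h
  refine ⟨g, funext fun j => mul_left_cancel₀ hM ?_⟩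
  have hcramer : Mᵀ.cramer f = M.det • g := funext fun i => by
    rw [Matrix.cramer_transpose_apply, hg i, Pi.smul_apply, smul_eq_mul]
  have := congrFun (Matrix.mulVec_cramer Mᵀ f) j
  rw [hcramer, Matrix.mulVec_smul, Matrix.mulVec_transpose, Matrix.det_transpose] at this
  simpa using this

theorem coeff_lin (a : Fin l → K) (j : Fin l) : (lin a).coeff (Finsupp.single j 1) = a j := by
  simp [lin, coeff_sum, coeff_C_mul, coeff_X, Finsupp.single_left_inj one_ne_zero]

theorem lin_injective : Injective (lin : (Fin l → K) → MvPolynomial (Fin l) K) :=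
  fun a b h => funext fun j => by rw [← coeff_lin a j, ← coeff_lin b j, h]

theorem lin_smul (c : K) (a : Fin l → K) : lin (c • a) = C c * lin a := by
  simp only [lin, Finset.mul_sum, Pi.smul_apply, smul_eq_mul, C_mul, mul_assoc]

theorem isHomogeneous_lin (a : Fin l → K) : (lin a).IsHomogeneous 1 :=
  IsHomogeneous.sum _ _ _ fun _ _ => isHomogeneous_C_mul_X _ _

theorem lin_zero : lin (0 : Fin l → K) = 0 := by
  simp [lin]

theorem lin_ne_zero {a : Fin l → K} (ha : a ≠ 0) : lin a ≠ 0 :=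
  lin_zero (K := K) ▸ lin_injective.ne ha

theorem totalDegree_lin {a : Fin l → K} (ha : a ≠ 0) : (lin a).totalDegree = 1 :=
  (isHomogeneous_lin a).totalDegree (lin_ne_zero ha)

theorem derApp_lin (f : Fin l → MvPolynomial (Fin l) K) (a : Fin l → K) :
    derApp f (lin a) = f ⬝ᵥ fun j => C (a j) := by
  simp [derApp, lin, dotProduct, pderiv_X, Pi.single_apply]

theorem irreducible_lin {a : Fin l → K} (ha : a ≠ 0) : Irreducible (lin a) := by
  refine irreducible_of_totalDegree_eq_one (totalDegree_lin ha) fun x hx => ?_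
  obtain ⟨j, hj⟩ := ne_iff.mp ha
  have := hx (Finsupp.single j 1)
  rw [coeff_lin] at this
  exact isUnit_of_dvd_unit this hj.isUnit

theorem prime_lin {a : Fin l → K} (ha : a ≠ 0) : Prime (lin a) :=
  UniqueFactorizationMonoid.irreducible_iff_prime.mp (irreducible_lin ha)

def definingPolynomial (α : Fin n → Fin l → K) : MvPolynomial (Fin l) K :=
  ∏ k, lin (α k)

theorem isHomogeneous_definingPolynomial (α : Fin n → Fin l → K) :
    (definingPolynomial α).IsHomogeneous n := by
  simpa [definingPolynomial] using
    IsHomogeneous.prod Finset.univ _ (fun _ => 1) fun k _ => isHomogeneous_lin (α k)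

theorem isLogDer_updateRow {α : Fin n → Fin l → K}
    {M : Matrix (Fin l) (Fin l) (MvPolynomial (Fin l) K)} (hM : ∀ i, IsLogDer α (M i))
    {f : Fin l → MvPolynomial (Fin l) K} (hf : IsLogDer α f)
    (i i' : Fin l) : IsLogDer α (M.updateRow i f i') := by
  rcases eq_or_ne i' i with rfl | hne
  · simpa using hf
  · simpa [hne] using hM i'

namespace IsArrangement

variable {α : Fin n → Fin l → K} (hα : IsArrangement α)
include hα

theorem pairwise_isRelPrime_lin : Pairwise (IsRelPrime on fun k => lin (α k)) := by
  intro k k' hne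
  rw [Function.onFun, (irreducible_lin (hα.1 k)).isRelPrime_iff_not_dvd]
  intro hdvd
  obtain ⟨u, hu⟩ :=
    (irreducible_lin (hα.1 k)).associated_of_dvd (irreducible_lin (hα.1 k')) hdvd
  obtain ⟨c, -, hc⟩ := isUnit_iff_eq_C_of_isReduced.mp u.isUnit
  exact hα.2 k k' hne c (lin_injective (by rw [lin_smul, ← hc, ← hu, mul_comm]))

theorem definingPolynomial_ne_zero : definingPolynomial α ≠ 0 :=
  Finset.prod_ne_zero_iff.mpr fun k _ => lin_ne_zero (hα.1 k)

theorem lin_dvd_det {M : Matrix (Fin l) (Fin l) (MvPolynomial (Fin l) K)}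
    (hM : ∀ i, IsLogDer α (M i)) (k : Fin n) : lin (α k) ∣ M.det := by
  refine (prime_lin (hα.1 k)).dvd_det_of_dvd_mulVec M (v := fun j => C (α k j)) ?_ fun i => ?_
  · intro hall
    obtain ⟨j, hj⟩ := ne_iff.mp (hα.1 k)
    exact (prime_lin (hα.1 k)).not_isUnit (isUnit_of_dvd_unit (hall j) (hj.isUnit.map C))
  · have := hM i k
    rwa [derApp_lin] at this

theorem definingPolynomial_dvd_det {M : Matrix (Fin l) (Fin l) (MvPolynomial (Fin l) K)}
    (hM : ∀ i, IsLogDer α (M i)) : definingPolynomial α ∣ M.det :=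
  Fintype.prod_dvd_of_isRelPrime hα.pairwise_isRelPrime_lin (hα.lin_dvd_det hM)

theorem associated_definingPolynomial_det
    {M : Matrix (Fin l) (Fin l) (MvPolynomial (Fin l) K)} (hM : ∀ i, IsLogDer α (M i))
    {e : Fin l → ℕ} (hhom : ∀ i j, (M i j).IsHomogeneous (e i)) (hdeg : ∑ i, e i = n)
    (hdet : M.det ≠ 0) : Associated (definingPolynomial α) M.det := by
  refine associated_of_dvd_of_totalDegree_le (hα.definingPolynomial_dvd_det hM) hdet ?_
  rw [(M.det_isHomogeneous_of_rows e hhom).totalDegree hdet, hdeg,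
    (isHomogeneous_definingPolynomial α).totalDegree hα.definingPolynomial_ne_zero]

end IsArrangement

/-- Saito's criterion, degree form: if `δ_1, …, δ_l ∈ D(A)` are homogeneous, linearly
independent over `S`, and `∑ pdeg(δ_i) = n`, then they form a free basis of `D(A)`. -/
theorem saito_criterion_degrees (α : Fin n → Fin l → K) (hα : IsArrangement α)
    (δ : Fin l → Fin l → MvPolynomial (Fin l) K) (hδ : ∀ i, IsLogDer α (δ i))
    (e : Fin l → ℕ)
    -- each `δ_i` is homogeneous of polynomial degree `e i`
    (hhom : ∀ i j, (δ i j).IsHomogeneous (e i))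
    -- the `δ_i` are linearly independent over `S`
    (hind : ∀ g : Fin l → MvPolynomial (Fin l) K,
      (fun j => ∑ i, g i * δ i j) = 0 → g = 0)
    (hdeg : ∑ i, e i = n) :
    ∀ f : Fin l → MvPolynomial (Fin l) K, IsLogDer α f →
      ∃! g : Fin l → MvPolynomial (Fin l) K, f = fun j => ∑ i, g i * δ i j := by
  intro f hf
  let M : Matrix (Fin l) (Fin l) (MvPolynomial (Fin l) K) := Matrix.of δ
  have hdet : M.det ≠ 0 := fun h0 => by
    obtain ⟨g, hg, hgM⟩ := exists_vecMul_eq_zero_iff.mpr h0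
    exact hg (hind g hgM)
  have hassoc := hα.associated_definingPolynomial_det hδ hhom hdeg hdet
  obtain ⟨g, hg⟩ := exists_vecMul_eq_of_det_dvd hdet fun i =>
    hassoc.symm.dvd.trans (hα.definingPolynomial_dvd_det (isLogDer_updateRow hδ hf i))
  refine ⟨g, hg.symm, fun g' hg' => sub_eq_zero.mp (hind _ ?_)⟩
  change (g' - g) ᵥ* M = 0
  rw [sub_vecMul, sub_eq_zero]
  exact hg'.symm.trans hg.symm
end
end
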